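/- arXiv:1908.02824 — 3 statements merged into one kernel-verified Lean document; each statement's English description precedes it below -/
import Mathlib

section
/- For every natural number μ there is a constant C > 0 depending only on μ with the following property. Let X be a metric space, ε > 0, and (x_i)_{i∈I} a finite family of points of X such that every point of X is within distance ε/2 of some x_i, and for every point x ∈ X there are at most μ indices i with d(x, x_i) < ε. For each i define φ̂_i(x) = 1 if d(x_i, x) ≤ ε/2, φ̂_i(x) = 2 − 2ε⁻¹ d(x_i, x) if ε/2 ≤ d(x_i, x) ≤ ε, and φ̂_i(x) = 0 if d(x_i, x) ≥ ε; and set φ_i(x) = φ̂_i(x) / Σ_{j∈I} φ̂_j(x). Then the map φ : X → ℝ^I defined by φ(x) = (φ_i(x))_{i∈I}, where ℝ^I carries the Euclidean norm, is Lipschitz with constant C/ε. -/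
/-!
Each `φ̂_i` is the affine function `2 - 2 ε⁻¹ d(x_i, ·)` clamped to `[0, 1]`, hence
`2/ε`-Lipschitz. The denominators are at least `1` by the covering hypothesis, and for two
points `a`, `b` only the at most `2μ` indices with `x_i` within `ε` of `a` or `b` contribute.
So the two denominators differ by at most `2μ · (2/ε) d(a, b)`, the estimate
`|u/s - v/t| ≤ |u - v| + |s - t|` bounds each coordinate of `φ a - φ b`, and the Euclidean
norm is at most the `ℓ¹` norm over the `2μ` active coordinates.
-/

open Finset

noncomputable def tent (ε d : ℝ) : ℝ := min 1 (max 0 (2 - 2 * ε⁻¹ * d))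

section Tent

variable {ε : ℝ}

lemma ite_eq_tent (hε : 0 < ε) (d : ℝ) :
    (if d ≤ ε / 2 then 1 else if d ≤ ε then 2 - 2 * ε⁻¹ * d else 0) = tent ε d := by
  have h₁ : 1 ≤ 2 - 2 * ε⁻¹ * d ↔ d ≤ ε / 2 := by
    rw [← sub_nonneg, ← sub_nonneg (b := d)]
    field_simp
    constructor <;> intro h <;> linarith
  have h₀ : 0 ≤ 2 - 2 * ε⁻¹ * d ↔ d ≤ ε := by
    rw [← sub_nonneg (b := d)]
    field_simp
    constructor <;> intro h <;> linarith
  unfold tent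
  split_ifs with hd₁ hd₀
  · rw [max_eq_right (by linarith [h₁.2 hd₁]), min_eq_left (h₁.2 hd₁)]
  · rw [max_eq_right (h₀.2 hd₀), min_eq_right (not_le.1 (mt h₁.1 hd₁)).le]
  · rw [max_eq_left (not_le.1 (mt h₀.1 hd₀)).le, min_eq_right zero_le_one]

lemma tent_nonneg (ε d : ℝ) : 0 ≤ tent ε d := le_min zero_le_one (le_max_left _ _)

lemma tent_of_le_half (hε : 0 < ε) {d : ℝ} (hd : d ≤ ε / 2) : tent ε d = 1 := by
  rw [← ite_eq_tent hε, if_pos hd]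

lemma tent_of_le (hε : 0 < ε) {d : ℝ} (hd : ε ≤ d) : tent ε d = 0 := by
  rw [← ite_eq_tent hε]
  split_ifs with h₁ h₂
  · linarith
  · rw [le_antisymm h₂ hd, mul_assoc, inv_mul_cancel₀ hε.ne']
    norm_num
  · rfl

lemma abs_tent_sub_tent_le (hε : 0 < ε) (d d' : ℝ) :
    |tent ε d - tent ε d'| ≤ 2 * ε⁻¹ * |d - d'| :=
  calc |tent ε d - tent ε d'|
      ≤ |max 0 (2 - 2 * ε⁻¹ * d) - max 0 (2 - 2 * ε⁻¹ * d')| := by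
        simpa [tent] using
          abs_min_sub_min_le_max 1 (max 0 (2 - 2 * ε⁻¹ * d)) 1 (max 0 (2 - 2 * ε⁻¹ * d'))
    _ ≤ |(2 - 2 * ε⁻¹ * d) - (2 - 2 * ε⁻¹ * d')| := by
        rw [max_comm 0, max_comm 0]
        exact abs_max_sub_max_le_abs _ _ 0
    _ = 2 * ε⁻¹ * |d - d'| := by
        rw [show (2 - 2 * ε⁻¹ * d) - (2 - 2 * ε⁻¹ * d') = 2 * ε⁻¹ * (d' - d) by ring, abs_mul,
          abs_of_pos (by positivity), abs_sub_comm]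

end Tent

lemma abs_div_sub_div_le {u v s t : ℝ} (hs : 1 ≤ s) (ht : 1 ≤ t) (hv : 0 ≤ v) (hvt : v ≤ t) :
    |u / s - v / t| ≤ |u - v| + |s - t| := by
  have hs₀ : 0 < s := by linarith
  have ht₀ : 0 < t := by linarith
  have hvt' : |v / t| ≤ 1 := by
    rw [abs_of_nonneg (by positivity)]
    exact div_le_one_of_le₀ hvt ht₀.le
  calc |u / s - v / t| = |(u - v) / s + v / t * ((t - s) / s)| := by
        congr 1
        field_simp
        ring
    _ ≤ |u - v| / s + |v / t| * (|t - s| / s) := by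
        simpa only [abs_div, abs_mul, abs_of_pos hs₀] using
          abs_add_le ((u - v) / s) (v / t * ((t - s) / s))
    _ ≤ |u - v| + 1 * |s - t| := by
        rw [abs_sub_comm t s]
        gcongr
        · exact div_le_self (abs_nonneg _) hs
        · exact div_le_self (abs_nonneg _) hs
    _ = |u - v| + |s - t| := by rw [one_mul]

section Normalize

variable {I : Type*} [Fintype I]

lemma sum_le_card_mul_of_eq_zero {f : I → ℝ} {A : Finset I} {δ : ℝ}
    (hA : ∀ i ∉ A, f i = 0) (hδ : ∀ i, f i ≤ δ) : ∑ i, f i ≤ #A * δ := by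
  rw [← sum_subset (subset_univ A) fun i _ hi => hA i hi, ← nsmul_eq_mul]
  exact sum_le_card_nsmul A f δ fun i _ => hδ i

lemma EuclideanSpace.dist_le_sum_abs_sub (x y : EuclideanSpace ℝ I) :
    dist x y ≤ ∑ i, |x i - y i| := by
  rw [EuclideanSpace.dist_eq, Real.sqrt_le_left (sum_nonneg fun i _ => abs_nonneg _)]
  simpa only [Real.dist_eq] using sum_sq_le_sq_sum_of_nonneg fun i _ => abs_nonneg (x i - y i)

theorem dist_toLp_div_sum_le {u v : I → ℝ} (hv : 0 ≤ v) (hu₁ : 1 ≤ ∑ i, u i)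
    (hv₁ : 1 ≤ ∑ i, v i) {A : Finset I} (hA : ∀ i ∉ A, u i = 0 ∧ v i = 0) {L : ℝ}
    (hL : ∀ i, |u i - v i| ≤ L) :
    dist (WithLp.toLp 2 fun i => u i / ∑ j, u j : EuclideanSpace ℝ I)
      (WithLp.toLp 2 fun i => v i / ∑ j, v j) ≤ #A * ((1 + #A) * L) := by
  have hsum : |∑ i, u i - ∑ i, v i| ≤ #A * L := by
    rw [← sum_sub_distrib]
    refine (abs_sum_le_sum_abs _ _).trans (sum_le_card_mul_of_eq_zero (fun i hi => ?_) hL)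
    simp [hA i hi]
  refine (EuclideanSpace.dist_le_sum_abs_sub _ _).trans
    (sum_le_card_mul_of_eq_zero (fun i hi => by simp [hA i hi]) fun i => ?_)
  calc |u i / ∑ j, u j - v i / ∑ j, v j| ≤ |u i - v i| + |∑ j, u j - ∑ j, v j| :=
        abs_div_sub_div_le hu₁ hv₁ (hv i) (single_le_sum (fun j _ => hv j) (mem_univ i))
    _ ≤ (1 + #A) * L := by linarith [hL i]

end Normalize

section Cover

variable {X I : Type*} [PseudoMetricSpace X] [Fintype I] {ε : ℝ} {x : I → X}

lemma one_le_sum_tent_dist (hε : 0 < ε) {y : X} {i : I} (hi : dist y (x i) ≤ ε / 2) :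
    1 ≤ ∑ j, tent ε (dist (x j) y) := by
  rw [← tent_of_le_half hε (dist_comm y (x i) ▸ hi)]
  exact single_le_sum (f := fun j => tent ε (dist (x j) y)) (fun j _ => tent_nonneg ε _)
    (mem_univ i)

lemma abs_tent_dist_sub_tent_dist_le (hε : 0 < ε) (c a b : X) :
    |tent ε (dist c a) - tent ε (dist c b)| ≤ 2 * ε⁻¹ * dist a b :=
  (abs_tent_sub_tent_le hε _ _).trans <| by
    gcongr
    simpa only [dist_comm c] using abs_dist_sub_le a b c

lemma card_filter_dist_lt_union_le [DecidableEq I] {μ : ℕ}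
    (hmult : ∀ y : X, {i : I | dist y (x i) < ε}.ncard ≤ μ) (a b : X) :
    #(({i | dist a (x i) < ε} : Finset I) ∪ ({i | dist b (x i) < ε} : Finset I)) ≤ 2 * μ := by
  have hcard (y : X) : #({i | dist y (x i) < ε} : Finset I) ≤ μ := by
    simpa [Set.ncard_eq_toFinset_card'] using hmult y
  exact (card_union_le _ _).trans (two_mul μ ▸ add_le_add (hcard a) (hcard b))

end Cover

/-- For every multiplicity bound `μ` there is `C > 0` such that the partition of
unity built from the tent functions `φ̂_i` subordinate to a cover of `X` by
`ε`-balls with multiplicity at most `μ` gives a `C/ε`-Lipschitz barycentric map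
`φ : X → ℝ^I` (with the Euclidean norm). -/
theorem partition_of_unity_lipschitz (μ : ℕ) :
    ∃ C : ℝ, 0 < C ∧
      ∀ (X : Type) [MetricSpace X] (ε : ℝ), 0 < ε →
      ∀ (I : Type) [Fintype I] (x : I → X),
        (∀ y : X, ∃ i, dist y (x i) ≤ ε / 2) →
        (∀ y : X, ({i : I | dist y (x i) < ε}).ncard ≤ μ) →
        ∀ (φhat : I → X → ℝ),
          (φhat = fun i y =>
            if dist (x i) y ≤ ε / 2 then 1
            else if dist (x i) y ≤ ε then 2 - 2 * ε⁻¹ * dist (x i) y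
            else 0) →
        ∀ (φ : X → EuclideanSpace ℝ I),
          (φ = fun y => (WithLp.toLp 2 (fun i => φhat i y / ∑ j, φhat j y) : EuclideanSpace ℝ I)) →
        ∀ a b : X, dist (φ a) (φ b) ≤ (C / ε) * dist a b := by
  refine ⟨8 * μ ^ 2 + 4 * μ + 1, by positivity, ?_⟩
  rintro X _ ε hε I _ x hcover hmult φhat rfl φ rfl a b
  classical
  simp only [ite_eq_tent hε]
  set A := ({i | dist a (x i) < ε} : Finset I) ∪ ({i | dist b (x i) < ε} : Finset I)
  have hA : (#A : ℝ) ≤ 2 * μ := by exact_mod_cast card_filter_dist_lt_union_le hmult a b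
  have hsupp : ∀ i ∉ A, tent ε (dist (x i) a) = 0 ∧ tent ε (dist (x i) b) = 0 := by
    intro i hi
    simp only [A, mem_union, mem_filter, mem_univ, true_and, not_or, not_lt] at hi
    exact ⟨tent_of_le hε (dist_comm a (x i) ▸ hi.1), tent_of_le hε (dist_comm b (x i) ▸ hi.2)⟩
  obtain ⟨i, hi⟩ := hcover a
  obtain ⟨j, hj⟩ := hcover b
  calc _ ≤ #A * ((1 + #A) * (2 * ε⁻¹ * dist a b)) :=
        dist_toLp_div_sum_le (fun i => tent_nonneg ε _) (one_le_sum_tent_dist hε hi)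
          (one_le_sum_tent_dist hε hj) hsupp fun i => abs_tent_dist_sub_tent_dist_le hε _ a b
    _ ≤ 2 * μ * ((1 + 2 * μ) * (2 * ε⁻¹ * dist a b)) := by gcongr
    _ = (8 * μ ^ 2 + 4 * μ) / ε * dist a b := by ring
    _ ≤ (8 * μ ^ 2 + 4 * μ + 1) / ε * dist a b := by gcongr ?_ / _ * _; linarith
end

section
/- For every natural number k there is a constant L > 0 depending only on k with the following property. Let n ≥ 1 and let v_0, …, v_k be points of the unit sphere S^n ⊆ ℝ^{n+1} with ‖v_i − v_j‖ ≤ 1 for all i, j. Then the map sending a point t = (t_0, …, t_k) of the standard simplex Δ^k = {t ∈ ℝ^{k+1} : t_i ≥ 0, Σ t_i = 1} (with the Euclidean metric) to ‖Σ_{i=0}^{k} t_i v_i‖⁻¹ · (Σ_{i=0}^{k} t_i v_i) is a well-defined L-Lipschitz map from Δ^k to S^n. -/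
/-!
Unit vectors at mutual distance at most `1` have pairwise inner products at least `1/2`, so every
convex combination `x` of them satisfies `⟪v₀, x⟫ ≥ 1/2`, hence `‖x‖ ≥ 1/2`. Away from the ball of
radius `1/2` the radial projection `x ↦ x / ‖x‖` is `4`-Lipschitz, and the barycentric map
`t ↦ ∑ tᵢ vᵢ` is `(k+1)`-Lipschitz, so the composite is `4 (k+1)`-Lipschitz.
-/

open Finset NormedSpace

theorem NormedSpace.norm_normalize_sub_normalize_le {V : Type*} [NormedAddCommGroup V]
    [NormedSpace ℝ V] {x : V} (hx : x ≠ 0) (y : V) :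
    ‖normalize x - normalize y‖ ≤ 2 * ‖x - y‖ / ‖x‖ := by
  have hx' : 0 < ‖x‖ := norm_pos_iff.mpr hx
  have hsplit : normalize x - normalize y =
      ‖x‖⁻¹ • (x - y) + (‖x‖⁻¹ * ‖y‖ - 1) • normalize y := by
    rw [sub_smul, one_smul, mul_smul, norm_smul_normalize, smul_sub]
    simp only [normalize]
    abel
  have hnormalize : ‖normalize y‖ ≤ 1 := by
    by_cases hy : y = 0
    · simp [hy]
    · exact (norm_normalize_eq_one_iff.mpr hy).le
  have hradial : |‖x‖⁻¹ * ‖y‖ - 1| ≤ ‖x - y‖ / ‖x‖ := by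
    rw [show ‖x‖⁻¹ * ‖y‖ - 1 = (‖y‖ - ‖x‖) / ‖x‖ by field_simp, abs_div, abs_of_pos hx',
      abs_sub_comm]
    gcongr
    exact abs_norm_sub_norm_le x y
  calc ‖normalize x - normalize y‖
      ≤ ‖x‖⁻¹ * ‖x - y‖ + |‖x‖⁻¹ * ‖y‖ - 1| * ‖normalize y‖ := by
        rw [hsplit]
        refine (norm_add_le _ _).trans_eq ?_
        rw [norm_smul, norm_smul, Real.norm_of_nonneg (inv_nonneg.mpr hx'.le), Real.norm_eq_abs]
    _ ≤ ‖x - y‖ / ‖x‖ + ‖x - y‖ / ‖x‖ * 1 := by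
        rw [inv_mul_eq_div]
        gcongr
    _ = 2 * ‖x - y‖ / ‖x‖ := by ring

theorem one_half_le_inner_of_norm_sub_le_one {E : Type*} [NormedAddCommGroup E]
    [InnerProductSpace ℝ E] {u v : E} (hu : ‖u‖ = 1) (hv : ‖v‖ = 1) (huv : ‖u - v‖ ≤ 1) :
    1 / 2 ≤ inner ℝ u v := by
  have h := norm_sub_sq_real u v
  rw [hu, hv] at h
  nlinarith [norm_nonneg (u - v)]

theorem le_inner_sum_smul {E ι : Type*} [NormedAddCommGroup E] [InnerProductSpace ℝ E]
    [Fintype ι] {u : E} {v : ι → E} {t : ι → ℝ} {c : ℝ} (ht : ∀ i, 0 ≤ t i) (hsum : ∑ i, t i = 1)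
    (hc : ∀ i, c ≤ inner ℝ u (v i)) :
    c ≤ inner ℝ u (∑ i, t i • v i) :=
  (convex_halfSpace_ge (innerSL ℝ u).toLinearMap.isLinear c).sum_mem (fun i _ => ht i) hsum
    (fun i _ => hc i)

theorem one_half_le_norm_sum_smul {E ι : Type*} [NormedAddCommGroup E] [InnerProductSpace ℝ E]
    [Fintype ι] {v : ι → E} (hv : ∀ i, ‖v i‖ = 1) (hd : ∀ i j, ‖v i - v j‖ ≤ 1) {t : ι → ℝ}
    (ht : ∀ i, 0 ≤ t i) (hsum : ∑ i, t i = 1) :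
    1 / 2 ≤ ‖∑ i, t i • v i‖ := by
  obtain ⟨i₀⟩ : Nonempty ι := by
    by_contra h
    simp [not_nonempty_iff.mp h] at hsum
  calc 1 / 2 ≤ inner ℝ (v i₀) (∑ i, t i • v i) :=
        le_inner_sum_smul ht hsum fun i => one_half_le_inner_of_norm_sub_le_one (hv i₀) (hv i) (hd i₀ i)
    _ ≤ ‖v i₀‖ * ‖∑ i, t i • v i‖ := real_inner_le_norm _ _
    _ = ‖∑ i, t i • v i‖ := by rw [hv i₀, one_mul]

theorem norm_sum_smul_sub_sum_smul_le {E ι : Type*} [NormedAddCommGroup E] [NormedSpace ℝ E]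
    [Fintype ι] {v : ι → E} (hv : ∀ i, ‖v i‖ ≤ 1) (s t : EuclideanSpace ℝ ι) :
    ‖∑ i, s i • v i - ∑ i, t i • v i‖ ≤ Fintype.card ι * dist s t := by
  rw [← sum_sub_distrib]
  calc ‖∑ i, (s i • v i - t i • v i)‖
      ≤ ∑ i, ‖(s i - t i) • v i‖ := by
        simp only [← sub_smul]
        exact norm_sum_le _ _
    _ ≤ ∑ _i, dist s t := by
        gcongr with i
        rw [norm_smul, ← dist_eq_norm]
        exact mul_le_of_le_one_right dist_nonneg (hv i) |>.trans (PiLp.dist_apply_le s t i)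
    _ = Fintype.card ι * dist s t := by simp

/-- For every `k` there is `L > 0` such that: for unit vectors `v 0, …, v k` in
`ℝ^{n+1}` (`n ≥ 1`) with pairwise distances at most 1, the radially normalized
barycentric map from the standard simplex `Δ^k` to the unit sphere is well
defined and `L`-Lipschitz. -/
theorem simplex_flattening_lipschitz (k : ℕ) :
    ∃ L : ℝ, 0 < L ∧
      ∀ (n : ℕ), 1 ≤ n →
      ∀ v : Fin (k + 1) → EuclideanSpace ℝ (Fin (n + 1)),
        (∀ i, ‖v i‖ = 1) → (∀ i j, ‖v i - v j‖ ≤ 1) →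
        (∀ t : EuclideanSpace ℝ (Fin (k + 1)),
            (∀ i, 0 ≤ t i) → (∑ i, t i) = 1 → (∑ i, t i • v i) ≠ 0) ∧
        (∀ t : EuclideanSpace ℝ (Fin (k + 1)),
            (∀ i, 0 ≤ t i) → (∑ i, t i) = 1 →
            ‖‖∑ i, t i • v i‖⁻¹ • ∑ i, t i • v i‖ = 1) ∧
        (∀ s t : EuclideanSpace ℝ (Fin (k + 1)),
            (∀ i, 0 ≤ s i) → (∑ i, s i) = 1 → (∀ i, 0 ≤ t i) → (∑ i, t i) = 1 →
            ‖(‖∑ i, s i • v i‖⁻¹ • ∑ i, s i • v i) -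
              (‖∑ i, t i • v i‖⁻¹ • ∑ i, t i • v i)‖ ≤ L * dist s t) := by
  refine ⟨4 * (k + 1), by positivity, fun n _ v hv hd => ?_⟩
  have hne : ∀ t : EuclideanSpace ℝ (Fin (k + 1)), (∀ i, 0 ≤ t i) → (∑ i, t i) = 1 →
      (∑ i, t i • v i) ≠ 0 := fun t ht hsum =>
    norm_pos_iff.mp (one_half_pos.trans_le (one_half_le_norm_sum_smul hv hd ht hsum))
  refine ⟨hne, fun t ht hsum => norm_normalize_eq_one_iff.mpr (hne t ht hsum),
    fun s t hs hssum ht htsum => ?_⟩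
  calc ‖normalize (∑ i, s i • v i) - normalize (∑ i, t i • v i)‖
      ≤ 2 * ‖∑ i, s i • v i - ∑ i, t i • v i‖ / ‖∑ i, s i • v i‖ :=
        norm_normalize_sub_normalize_le (hne s hs hssum) _
    _ ≤ 2 * ‖∑ i, s i • v i - ∑ i, t i • v i‖ / (1 / 2) := by
        gcongr
        exact one_half_le_norm_sum_smul hv hd hs hssum
    _ ≤ 4 * (k + 1) * dist s t := by
        have := norm_sum_smul_sub_sum_smul_le (fun i => (hv i).le) s t
        rw [Fintype.card_fin, Nat.cast_add_one] at this
        linarith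
end

section
/- Let n ≥ 1, let X be a metric space, let L ≥ 0, and let f : X → S^n be a continuous map which is Lipschitz with constant L and is not nullhomotopic. Then μH^n(S^n) ≤ L^n · μH^n(X), where μH^n denotes the n-dimensional Hausdorff measure. -/
open MeasureTheory Metric
open scoped NNReal ENNReal

/-!
A map to the sphere that misses a point `p` factors through `S^n \ {p}`, which stereographic
projection identifies with a real vector space; such a map is therefore nullhomotopic. Hence a
non-nullhomotopic map is onto, and an `L`-Lipschitz surjection multiplies Hausdorff
`n`-measure by at most `L ^ n`.
-/

theorem ContinuousMap.nullhomotopic_of_range_subset {X Y : Type*} [TopologicalSpace X]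
    [TopologicalSpace Y] {s : Set Y} [ContractibleSpace s] (f : C(X, Y))
    (hf : Set.range f ⊆ s) : f.Nullhomotopic :=
  ((id_nullhomotopic s).comp_left ⟨_, f.continuous.codRestrict fun x => hf ⟨x, rfl⟩⟩).comp_right
    ⟨Subtype.val, continuous_subtype_val⟩

section Sphere

variable {E : Type*} [NormedAddCommGroup E] [InnerProductSpace ℝ E]

instance contractibleSpace_sphere_compl_singleton (p : sphere (0 : E) 1) :
    ContractibleSpace ({p}ᶜ : Set (sphere (0 : E) 1)) := by
  have hp : ‖(p : E)‖ = 1 := by simp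
  let e := stereographic hp
  have : ContractibleSpace e.target := by
    rw [stereographic_target hp]
    exact convex_univ.contractibleSpace Set.univ_nonempty
  exact ((Homeomorph.setCongr (stereographic_source hp)).symm.trans
    e.toHomeomorphSourceTarget).contractibleSpace

theorem ContinuousMap.surjective_of_not_nullhomotopic_sphere {X : Type*} [TopologicalSpace X]
    (f : C(X, sphere (0 : E) 1)) (hf : ¬ f.Nullhomotopic) : Function.Surjective f := by
  intro p
  by_contra! hp
  exact hf (f.nullhomotopic_of_range_subset (s := {p}ᶜ) (Set.range_subset_iff.2 hp))

end Sphere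

theorem LipschitzWith.hausdorffMeasure_univ_le_of_surjective {X Y : Type*} [EMetricSpace X]
    [MeasurableSpace X] [BorelSpace X] [EMetricSpace Y] [MeasurableSpace Y] [BorelSpace Y]
    {K : ℝ≥0} {f : X → Y} (hlip : LipschitzWith K f) (hsurj : Function.Surjective f) {d : ℝ}
    (hd : 0 ≤ d) : μH[d] (Set.univ : Set Y) ≤ (K : ℝ≥0∞) ^ d * μH[d] (Set.univ : Set X) := by
  simpa [Set.image_univ, hsurj.range_eq] using hlip.hausdorffMeasure_image_le hd Set.univ

theorem hausdorff_measure_le_of_not_nullhomotopic_general {X : Type*} [MetricSpace X]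
    [MeasurableSpace X] [BorelSpace X] {n : ℕ} {L : ℝ} (hL : 0 ≤ L)
    (f : C(X, Metric.sphere (0 : EuclideanSpace ℝ (Fin (n + 1))) 1))
    (hf : ∀ a b : X, dist (f a) (f b) ≤ L * dist a b)
    (hnull : ¬ f.Nullhomotopic) :
    μH[(n : ℝ)] (Set.univ : Set (Metric.sphere (0 : EuclideanSpace ℝ (Fin (n + 1))) 1))
      ≤ ENNReal.ofReal (L ^ n) * μH[(n : ℝ)] (Set.univ : Set X) := by
  have hlip : LipschitzWith L.toNNReal f :=
    .of_dist_le_mul fun a b => by simpa [Real.coe_toNNReal L hL] using hf a b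
  have hle := hlip.hausdorffMeasure_univ_le_of_surjective
    (f.surjective_of_not_nullhomotopic_sphere hnull) n.cast_nonneg
  rw [ENNReal.rpow_natCast] at hle
  rwa [ENNReal.ofReal_pow hL]

/-- A non-nullhomotopic `L`-Lipschitz map from a metric space `X` to the unit
sphere `S^n` forces `μH^n(S^n) ≤ L^n · μH^n(X)`. -/
theorem hausdorff_measure_le_of_not_nullhomotopic {X : Type*} [MetricSpace X]
    [MeasurableSpace X] [BorelSpace X] {n : ℕ} (hn : 1 ≤ n) {L : ℝ} (hL : 0 ≤ L)
    (f : C(X, Metric.sphere (0 : EuclideanSpace ℝ (Fin (n + 1))) 1))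
    (hf : ∀ a b : X, dist (f a) (f b) ≤ L * dist a b)
    (hnull : ¬ f.Nullhomotopic) :
    μH[(n : ℝ)] (Set.univ : Set (Metric.sphere (0 : EuclideanSpace ℝ (Fin (n + 1))) 1))
      ≤ ENNReal.ofReal (L ^ n) * μH[(n : ℝ)] (Set.univ : Set X) :=
  hausdorff_measure_le_of_not_nullhomotopic_general hL f hf hnull
end
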